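/- Let σ : ℝ⁴ → ℝ be smooth and define L^i_{jk} as in the JCM model and R^l_{ijk} = ∂L^l_{ij}/∂x^k − ∂L^l_{ik}/∂x^j + Σ_r(L^r_{ij}L^l_{rk} − L^r_{ik}L^l_{rj}). Then the Ricci contraction R_{ij} = Σ_m R^m_{ijm} equals −2(σ_{ij} − σ_i σ_j) + ((1−δ_{ij})/3)[3Δσ + 6‖grad σ‖² − 2(div D_σ)² − 𝔖], where Δσ = σ_{11}+σ_{22}+σ_{33}+σ_{44}, ‖grad σ‖² = Σ_i σ_i², div D_σ = Σ_i σ_i, and 𝔖 = Σ_{p,q=1}^4 σ_{pq}. -/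

import Mathlib

/-- Partial derivative in the `i`-th coordinate direction. -/
noncomputable def pd (f : (Fin 4 → ℝ) → ℝ) (x : Fin 4 → ℝ) (i : Fin 4) : ℝ :=
  fderiv ℝ f x (Pi.single i 1)

/-- Second partial derivative `∂²f/∂x^i∂x^j`. -/
noncomputable def pd2 (f : (Fin 4 → ℝ) → ℝ) (x : Fin 4 → ℝ) (i j : Fin 4) : ℝ :=
  pd (fun z => pd f z j) x i

/-- Kronecker delta. -/
noncomputable def kd (i j : Fin 4) : ℝ := if i = j then 1 else 0

/-- The Cartan connection coefficients `L^i_{jk}(x)` of the JCM model. -/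
noncomputable def Lcon (σ : (Fin 4 → ℝ) → ℝ) (i j k : Fin 4) (x : Fin 4 → ℝ) : ℝ :=
  kd i j * pd σ x k + kd i k * pd σ x j + (1 - kd j k) * pd σ x i
    - ((1 - kd j k) / 3) * ∑ m : Fin 4, pd σ x m

/-- The curvature d-tensor `R^l_{ijk}(x)`. -/
noncomputable def Rcurv (σ : (Fin 4 → ℝ) → ℝ) (l i j k : Fin 4) (x : Fin 4 → ℝ) : ℝ :=
  pd (Lcon σ l i j) x k - pd (Lcon σ l i k) x j +
    ∑ r : Fin 4, (Lcon σ r i j x * Lcon σ l r k x - Lcon σ r i k x * Lcon σ l r j x)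

lemma pd_contDiff {σ : (Fin 4 → ℝ) → ℝ} (hσ : ContDiff ℝ (⊤ : ℕ∞) σ) (m : Fin 4) :
    ContDiff ℝ (⊤ : ℕ∞) (fun z => pd σ z m) :=
  (hσ.fderiv_right (by simp)).clm_apply contDiff_const

lemma pd2_symm {σ : (Fin 4 → ℝ) → ℝ} (hσ : ContDiff ℝ (⊤ : ℕ∞) σ) (x : Fin 4 → ℝ) (a b : Fin 4) :
    pd2 σ x a b = pd2 σ x b a := by
  have hs : IsSymmSndFDerivAt ℝ σ x := hσ.contDiffAt.isSymmSndFDerivAt (by rw [minSmoothness_of_isRCLikeNormedField]; exact WithTop.coe_le_coe.mpr (le_top : (2:ℕ∞) ≤ ⊤))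
  have hd : DifferentiableAt ℝ (fderiv ℝ σ) x :=
    ((hσ.fderiv_right (m := 1) (by exact WithTop.coe_le_coe.mpr le_top)).differentiable (by simp)).differentiableAt
  have key : ∀ v w : Fin 4 → ℝ, fderiv ℝ (fun z => fderiv ℝ σ z w) x v
      = fderiv ℝ (fderiv ℝ σ) x v w := by
    intro v w
    rw [fderiv_clm_apply hd (differentiableAt_const w)]
    simp
  simp only [pd2, pd, key]
  exact hs _ _

lemma pd_Lcon {σ : (Fin 4 → ℝ) → ℝ} (hσ : ContDiff ℝ (⊤ : ℕ∞) σ) (l i j k : Fin 4) (x : Fin 4 → ℝ) :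
    pd (Lcon σ l i j) x k
      = kd l i * pd2 σ x k j + kd l j * pd2 σ x k i + (1 - kd i j) * pd2 σ x k l
        - ((1 - kd i j) / 3) * ∑ m : Fin 4, pd2 σ x k m := by
  have hd : ∀ m, HasFDerivAt (fun z => pd σ z m) (fderiv ℝ (fun z => pd σ z m) x) x := fun m =>
    (((pd_contDiff hσ m).differentiable (by simp)).differentiableAt).hasFDerivAt
  have h1 : HasFDerivAt (Lcon σ l i j)
      (kd l i • fderiv ℝ (fun z => pd σ z j) x + kd l j • fderiv ℝ (fun z => pd σ z i) x
        + (1 - kd i j) • fderiv ℝ (fun z => pd σ z l) x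
        - ((1 - kd i j) / 3) • ∑ m : Fin 4, fderiv ℝ (fun z => pd σ z m) x) x := by
    exact ((((hd j).const_mul (kd l i)).add ((hd i).const_mul (kd l j))).add
      ((hd l).const_mul (1 - kd i j))).sub
      ((HasFDerivAt.fun_sum (fun m _ => hd m)).const_mul ((1 - kd i j) / 3))
  rw [show pd (Lcon σ l i j) x k = fderiv ℝ (Lcon σ l i j) x (Pi.single k 1) from rfl, h1.fderiv]
  simp [pd2, pd, ContinuousLinearMap.sub_apply, ContinuousLinearMap.add_apply,
    ContinuousLinearMap.smul_apply, ContinuousLinearMap.sum_apply, smul_eq_mul]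

/-- The connection coefficients as an algebraic expression in the gradient values. -/
noncomputable def Lv (s : Fin 4 → ℝ) (i j k : Fin 4) : ℝ :=
  kd i j * s k + kd i k * s j + (1 - kd j k) * s i - ((1 - kd j k) / 3) * ∑ m : Fin 4, s m

lemma kdv : (kd 0 0 = 1) ∧ (kd 1 1 = 1) ∧ (kd 2 2 = 1) ∧ (kd 3 3 = 1) ∧
    (kd 0 1 = 0) ∧ (kd 0 2 = 0) ∧ (kd 0 3 = 0) ∧ (kd 1 0 = 0) ∧ (kd 1 2 = 0) ∧ (kd 1 3 = 0) ∧
    (kd 2 0 = 0) ∧ (kd 2 1 = 0) ∧ (kd 2 3 = 0) ∧ (kd 3 0 = 0) ∧ (kd 3 1 = 0) ∧ (kd 3 2 = 0) := by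
  refine ⟨?_,?_,?_,?_,?_,?_,?_,?_,?_,?_,?_,?_,?_,?_,?_,?_⟩ <;> simp [kd]

set_option maxHeartbeats 4000000 in
lemma alg (s : Fin 4 → ℝ) (h : Fin 4 → Fin 4 → ℝ) (hsym : ∀ a b, h a b = h b a) (i j : Fin 4) :
    ∑ m : Fin 4,
      ((kd m i * h m j + kd m j * h m i + (1 - kd i j) * h m m
          - ((1 - kd i j) / 3) * ∑ p : Fin 4, h m p)
        - (kd m i * h j m + kd m m * h j i + (1 - kd i m) * h j m
          - ((1 - kd i m) / 3) * ∑ p : Fin 4, h j p)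
        + ∑ r : Fin 4, (Lv s r i j * Lv s m r m - Lv s r i m * Lv s m r j))
      = -2 * (h i j - s i * s j) +
          ((1 - kd i j) / 3) *
            (3 * (∑ p : Fin 4, h p p) + 6 * (∑ p : Fin 4, (s p) ^ 2)
              - 2 * (∑ p : Fin 4, s p) ^ 2 - ∑ p : Fin 4, ∑ q : Fin 4, h p q) := by
  obtain ⟨k1,k2,k3,k4,k5,k6,k7,k8,k9,k10,k11,k12,k13,k14,k15,k16⟩ := kdv
  have hi : i = 0 ∨ i = 1 ∨ i = 2 ∨ i = 3 := by omega
  have hj : j = 0 ∨ j = 1 ∨ j = 2 ∨ j = 3 := by omega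
  rcases hi with rfl | rfl | rfl | rfl <;> rcases hj with rfl | rfl | rfl | rfl <;>
    simp only [Fin.isValue, Fin.sum_univ_four, Lv,
      k1,k2,k3,k4,k5,k6,k7,k8,k9,k10,k11,k12,k13,k14,k15,k16,
      hsym 1 0, hsym 2 0, hsym 3 0, hsym 2 1, hsym 3 1, hsym 3 2] <;>
    ring

theorem stmt16 (σ : (Fin 4 → ℝ) → ℝ) (hσ : ContDiff ℝ (⊤ : ℕ∞) σ) (x : Fin 4 → ℝ)
    (i j : Fin 4) :
    ∑ m : Fin 4, Rcurv σ m i j m x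
      = -2 * (pd2 σ x i j - pd σ x i * pd σ x j) +
          ((1 - kd i j) / 3) *
            (3 * (∑ p : Fin 4, pd2 σ x p p) + 6 * (∑ p : Fin 4, (pd σ x p) ^ 2)
              - 2 * (∑ p : Fin 4, pd σ x p) ^ 2 - ∑ p : Fin 4, ∑ q : Fin 4, pd2 σ x p q) := by
  simp only [Rcurv, pd_Lcon hσ]
  exact alg (pd σ x) (pd2 σ x) (pd2_symm hσ x) i j
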